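/- arXiv:2008.07214 — 2 statements merged into one kernel-verified Lean document; each statement's English description precedes it below -/
import Mathlib

section
/- Let p ≥ 1, let h : ℝ^p → ℝ be differentiable, let g : ℝ^p → ℝ be convex and K-Lipschitz with respect to the Euclidean norm, and let D be a p×p diagonal matrix whose diagonal entries all lie in [c₁, c₂] with 0 < c₁ ≤ c₂. For γ > 0 and β ∈ ℝ^p let T_γ(β) denote a minimizer over ℝ^p of x ↦ g(x) + (1/(2γ)) ‖x − (β − γ D⁻¹ ∇h(β))‖_D². If β ∈ ℝ^p satisfies ‖∇h(β)‖ ≤ M, then for all γ, γ' > 0, ‖T_γ(β) − T_{γ'}(β)‖ ≤ (√(c₂) M / c₁^{3/2} + K/c₁) (γ + γ') (Euclidean norms). -/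
/-!
Put `z = β - γ D⁻¹ ∇h(β)`, so that `T_γ(β)` is a `D`-proximal point of `g` at `z`. Moving
`T_γ(β)` a little towards `z` and using convexity of `g` shows
`‖T_γ(β) - z‖_D² ≤ γ (g z - g T_γ(β)) ≤ γ K ‖T_γ(β) - z‖`, and `c₁ ‖·‖² ≤ ‖·‖_D²` turns this into
`‖T_γ(β) - z‖ ≤ γ K / c₁`. The gradient step itself has length `‖z - β‖ ≤ γ M / c₁`, so
`T_γ(β)` lies within `(M / c₁ + K / c₁) γ` of `β`; the triangle inequality through `β` finishes.
-/

open scoped BigOperators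
open MeasureTheory Filter

noncomputable def dInner {p : ℕ} (d : Fin p → ℝ) (x y : EuclideanSpace ℝ (Fin p)) : ℝ :=
  ∑ i, d i * x i * y i

noncomputable def dNorm {p : ℕ} (d : Fin p → ℝ) (x : EuclideanSpace ℝ (Fin p)) : ℝ :=
  Real.sqrt (dInner d x x)

noncomputable def dInvMul {p : ℕ} (d : Fin p → ℝ) (v : EuclideanSpace ℝ (Fin p)) :
    EuclideanSpace ℝ (Fin p) :=
  WithLp.toLp 2 (fun i => (d i)⁻¹ * v i)

open Set Topology

theorem le_mul_sub_of_forall_prox_le {E : Type*} [AddCommGroup E] [Module ℝ E]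
    {g q : E → ℝ} (hg : ConvexOn ℝ univ g) (hq : ∀ (t : ℝ) v, q (t • v) = t ^ 2 * q v)
    {γ : ℝ} (hγ : 0 < γ) {x z : E}
    (hmin : ∀ y, g x + 1 / (2 * γ) * q (x - z) ≤ g y + 1 / (2 * γ) * q (y - z)) :
    q (x - z) ≤ γ * (g z - g x) := by
  have hsegment : ∀ t ∈ Ioo (0 : ℝ) 1, 2 * (q (x - z) - γ * (g z - g x)) ≤ t * q (x - z) := by
    rintro t ⟨ht0, ht1⟩
    have hy := hmin (x + t • (z - x))
    rw [show x + t • (z - x) - z = (1 - t) • (x - z) by module, hq] at hy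
    have hconv : g (x + t • (z - x)) ≤ (1 - t) * g x + t * g z := by
      rw [show x + t • (z - x) = (1 - t) • x + t • z by module]
      exact hg.2 (mem_univ x) (mem_univ z) (by linarith) ht0.le (by ring)
    -- `(1 - t)² - 1 = t (t - 2)`: after expanding, the factor `t` cancels
    have hdiv : t * (2 * (q (x - z) - γ * (g z - g x))) ≤ t * (t * q (x - z)) := by
      have := hy.trans (add_le_add_left hconv _)
      field_simp at this
      nlinarith
    exact le_of_mul_le_mul_left hdiv ht0
  have hlim : Tendsto (fun t : ℝ => t * q (x - z)) (𝓝[>] 0) (𝓝 0) := by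
    simpa using tendsto_nhdsWithin_of_tendsto_nhds
      ((by fun_prop : Continuous fun t : ℝ => t * q (x - z)).tendsto 0)
  have := ge_of_tendsto hlim (eventually_of_mem (Ioo_mem_nhdsGT one_pos) hsegment)
  linarith

theorem nonneg_of_forall_abs_sub_le {E : Type*} [NormedAddCommGroup E] [Nontrivial E]
    {g : E → ℝ} {K : ℝ} (hK : ∀ x y, |g x - g y| ≤ K * ‖x - y‖) : 0 ≤ K := by
  obtain ⟨x, hx⟩ := exists_ne (0 : E)
  have := (abs_nonneg _).trans (hK x 0)
  rw [sub_zero] at this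
  exact nonneg_of_mul_nonneg_left this (norm_pos_iff.mpr hx)

section WeightedNorm

variable {p : ℕ} {d : Fin p → ℝ} {c₁ : ℝ}

theorem dNorm_sq (hd : ∀ i, 0 ≤ d i) (v : EuclideanSpace ℝ (Fin p)) :
    dNorm d v ^ 2 = dInner d v v :=
  Real.sq_sqrt (Finset.sum_nonneg fun i _ => by
    simpa only [mul_assoc] using mul_nonneg (hd i) (mul_self_nonneg (v i)))

theorem dInner_smul_smul (t : ℝ) (v : EuclideanSpace ℝ (Fin p)) :
    dInner d (t • v) (t • v) = t ^ 2 * dInner d v v := by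
  simp only [dInner, Finset.mul_sum, PiLp.smul_apply, smul_eq_mul]
  exact Finset.sum_congr rfl fun i _ => by ring

theorem dNorm_smul_sq (hd : ∀ i, 0 ≤ d i) (t : ℝ) (v : EuclideanSpace ℝ (Fin p)) :
    dNorm d (t • v) ^ 2 = t ^ 2 * dNorm d v ^ 2 := by
  rw [dNorm_sq hd, dNorm_sq hd, dInner_smul_smul]

theorem mul_norm_sq_le_dNorm_sq (hc₁ : 0 ≤ c₁) (hd : ∀ i, c₁ ≤ d i)
    (v : EuclideanSpace ℝ (Fin p)) : c₁ * ‖v‖ ^ 2 ≤ dNorm d v ^ 2 := by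
  rw [dNorm_sq fun i => hc₁.trans (hd i), EuclideanSpace.norm_sq_eq, Finset.mul_sum]
  refine Finset.sum_le_sum fun i _ => ?_
  rw [Real.norm_eq_abs, sq_abs, mul_assoc, ← sq]
  exact mul_le_mul_of_nonneg_right (hd i) (sq_nonneg _)

theorem norm_dInvMul_le (hc₁ : 0 < c₁) (hd : ∀ i, c₁ ≤ d i) (w : EuclideanSpace ℝ (Fin p)) :
    ‖dInvMul d w‖ ≤ ‖w‖ / c₁ := by
  refine (pow_le_pow_iff_left₀ (norm_nonneg _) (by positivity) two_ne_zero).mp ?_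
  rw [div_pow, EuclideanSpace.norm_sq_eq, EuclideanSpace.norm_sq_eq, Finset.sum_div]
  refine Finset.sum_le_sum fun i _ => ?_
  have hdi : 0 < d i := hc₁.trans_le (hd i)
  simp only [dInvMul, PiLp.toLp_apply, norm_mul, norm_inv, Real.norm_eq_abs, abs_of_pos hdi,
    mul_pow, div_eq_inv_mul, ← inv_pow]
  gcongr
  exact hd i

theorem norm_sub_le_of_forall_prox_le (hc₁ : 0 < c₁) (hd : ∀ i, c₁ ≤ d i)
    {g : EuclideanSpace ℝ (Fin p) → ℝ} (hg : ConvexOn ℝ univ g) {K : ℝ} (hK₀ : 0 ≤ K)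
    (hK : ∀ x y, |g x - g y| ≤ K * ‖x - y‖) {γ : ℝ} (hγ : 0 < γ)
    {x z : EuclideanSpace ℝ (Fin p)}
    (hmin : ∀ y, g x + 1 / (2 * γ) * dNorm d (x - z) ^ 2 ≤
      g y + 1 / (2 * γ) * dNorm d (y - z) ^ 2) :
    ‖x - z‖ ≤ γ * K / c₁ := by
  have hprox : dNorm d (x - z) ^ 2 ≤ γ * (g z - g x) :=
    le_mul_sub_of_forall_prox_le (q := fun v => dNorm d v ^ 2) hg
      (dNorm_smul_sq fun i => hc₁.le.trans (hd i)) hγ hmin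
  have hlip : g z - g x ≤ K * ‖x - z‖ := by
    simpa only [norm_sub_rev] using (le_abs_self _).trans (hK z x)
  have hsq : c₁ * ‖x - z‖ ^ 2 ≤ γ * K * ‖x - z‖ := by
    calc c₁ * ‖x - z‖ ^ 2 ≤ dNorm d (x - z) ^ 2 := mul_norm_sq_le_dNorm_sq hc₁.le hd _
      _ ≤ γ * (K * ‖x - z‖) := hprox.trans (mul_le_mul_of_nonneg_left hlip hγ.le)
      _ = γ * K * ‖x - z‖ := by ring
  rw [le_div_iff₀ hc₁]
  nlinarith [norm_nonneg (x - z), mul_nonneg hγ.le hK₀]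

end WeightedNorm

theorem div_le_sqrt_mul_div_rpow {c₁ c₂ M : ℝ} (hc₁ : 0 < c₁) (hc₁₂ : c₁ ≤ c₂) (hM : 0 ≤ M) :
    M / c₁ ≤ Real.sqrt c₂ * M / c₁ ^ ((3 : ℝ) / 2) := by
  have hpow : c₁ ^ ((3 : ℝ) / 2) = Real.sqrt c₁ * c₁ := by
    rw [show (3 : ℝ) / 2 = 1 / 2 + 1 by norm_num, Real.rpow_add hc₁, Real.rpow_one,
      Real.sqrt_eq_rpow]
  rw [hpow, ← mul_div_mul_left M c₁ (Real.sqrt_pos.mpr hc₁).ne']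
  gcongr

theorem stmt_8_general {p : ℕ} (hp : 1 ≤ p)
    (g : EuclideanSpace ℝ (Fin p) → ℝ)
    (h' : EuclideanSpace ℝ (Fin p) → EuclideanSpace ℝ (Fin p))
    (hg : ConvexOn ℝ Set.univ g)
    (K : ℝ) (hK : ∀ x y : EuclideanSpace ℝ (Fin p), |g x - g y| ≤ K * ‖x - y‖)
    (c₁ c₂ : ℝ) (hc₁ : 0 < c₁) (hc₁₂ : c₁ ≤ c₂)
    (d : Fin p → ℝ) (hd : ∀ i, d i ∈ Set.Icc c₁ c₂)
    (T : ℝ → EuclideanSpace ℝ (Fin p) → EuclideanSpace ℝ (Fin p))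
    (hT : ∀ γ : ℝ, 0 < γ → ∀ b x : EuclideanSpace ℝ (Fin p),
      g (T γ b) + (1 / (2 * γ)) * (dNorm d (T γ b - (b - γ • dInvMul d (h' b)))) ^ 2 ≤
        g x + (1 / (2 * γ)) * (dNorm d (x - (b - γ • dInvMul d (h' b)))) ^ 2)
    (β : EuclideanSpace ℝ (Fin p)) (M : ℝ) (hM : ‖h' β‖ ≤ M) :
    ∀ γ γ' : ℝ, 0 < γ → 0 < γ' →
      ‖T γ β - T γ' β‖ ≤
        (Real.sqrt c₂ * M / c₁ ^ ((3 : ℝ) / 2) + K / c₁) * (γ + γ') := by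
  have : Nonempty (Fin p) := ⟨⟨0, hp⟩⟩
  have hK₀ : 0 ≤ K := nonneg_of_forall_abs_sub_le hK
  have hdc₁ : ∀ i, c₁ ≤ d i := fun i => (hd i).1
  have hstep : ∀ γ, 0 < γ → ‖T γ β - β‖ ≤ (M / c₁ + K / c₁) * γ := by
    intro γ hγ
    have hprox := norm_sub_le_of_forall_prox_le hc₁ hdc₁ hg hK₀ hK hγ (hT γ hγ β)
    have hgrad : ‖β - γ • dInvMul d (h' β) - β‖ ≤ γ * (M / c₁) := by
      rw [sub_sub_cancel_left, norm_neg, norm_smul, Real.norm_of_nonneg hγ.le]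
      exact mul_le_mul_of_nonneg_left ((norm_dInvMul_le hc₁ hdc₁ _).trans
        (div_le_div_of_nonneg_right hM hc₁.le)) hγ.le
    calc ‖T γ β - β‖ ≤ _ := norm_sub_le_norm_sub_add_norm_sub _ _ _
      _ ≤ γ * K / c₁ + γ * (M / c₁) := add_le_add hprox hgrad
      _ = (M / c₁ + K / c₁) * γ := by ring
  intro γ γ' hγ hγ'
  have hM' := div_le_sqrt_mul_div_rpow hc₁ hc₁₂ ((norm_nonneg _).trans hM)
  calc ‖T γ β - T γ' β‖ ≤ ‖T γ β - β‖ + ‖T γ' β - β‖ := by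
        simpa only [dist_eq_norm] using dist_triangle_right _ _ β
    _ ≤ (M / c₁ + K / c₁) * γ + (M / c₁ + K / c₁) * γ' :=
      add_le_add (hstep γ hγ) (hstep γ' hγ')
    _ ≤ (Real.sqrt c₂ * M / c₁ ^ ((3 : ℝ) / 2) + K / c₁) * (γ + γ') := by
      rw [← mul_add]
      gcongr

/-- For `h` differentiable, `g` convex and K-Lipschitz, `D` diagonal with entries
in `[c₁, c₂]`, and `T_γ(β) = Prox_{γ,g}^D(β − γ D⁻¹∇h(β))`: if `‖∇h(β)‖ ≤ M` then for all
`γ, γ' > 0`, `‖T_γ(β) − T_{γ'}(β)‖ ≤ (√c₂ M / c₁^{3/2} + K/c₁)(γ + γ')`. -/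
theorem stmt_8 {p : ℕ} (hp : 1 ≤ p)
    (h g : EuclideanSpace ℝ (Fin p) → ℝ)
    (h' : EuclideanSpace ℝ (Fin p) → EuclideanSpace ℝ (Fin p))
    (hdiff : ∀ x, HasGradientAt h (h' x) x)
    (hg : ConvexOn ℝ Set.univ g)
    (K : ℝ) (hK : ∀ x y : EuclideanSpace ℝ (Fin p), |g x - g y| ≤ K * ‖x - y‖)
    (c₁ c₂ : ℝ) (hc₁ : 0 < c₁) (hc₁₂ : c₁ ≤ c₂)
    (d : Fin p → ℝ) (hd : ∀ i, d i ∈ Set.Icc c₁ c₂)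
    (T : ℝ → EuclideanSpace ℝ (Fin p) → EuclideanSpace ℝ (Fin p))
    (hT : ∀ γ : ℝ, 0 < γ → ∀ b x : EuclideanSpace ℝ (Fin p),
      g (T γ b) + (1 / (2 * γ)) * (dNorm d (T γ b - (b - γ • dInvMul d (h' b)))) ^ 2 ≤
        g x + (1 / (2 * γ)) * (dNorm d (x - (b - γ • dInvMul d (h' b)))) ^ 2)
    (β : EuclideanSpace ℝ (Fin p)) (M : ℝ) (hM : ‖h' β‖ ≤ M) :
    ∀ γ γ' : ℝ, 0 < γ → 0 < γ' →
      ‖T γ β - T γ' β‖ ≤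
        (Real.sqrt c₂ * M / c₁ ^ ((3 : ℝ) / 2) + K / c₁) * (γ + γ') :=
  stmt_8_general hp g h' hg K hK c₁ c₂ hc₁ hc₁₂ d hd T hT β M hM
end

section
/- Let p ≥ 1, let F : ℝ^p → ℝ, let n ≥ 1, let β^{(0)}, …, β^{(n)}, β⋆, τ_1, …, τ_n, η_1, …, η_n ∈ ℝ^p, let γ_0, …, γ_n > 0, and let D^{(1)}, …, D^{(n)} be p×p diagonal matrices with positive diagonal entries. Assume that for each t = 1, …, n: (a) ‖β^{(t)} − β⋆‖_{D^{(t)}}² ≤ ‖β^{(t−1)} − β⋆‖_{D^{(t)}}² − 2γ_t (F(β^{(t)}) − F(β⋆)) − 2γ_t ⟨β^{(t)} − β⋆, η_t⟩_{D^{(t)}}, and (b) ‖β^{(t)} − τ_t‖_{D^{(t)}} ≤ γ_t ‖η_t‖_{D^{(t)}}. Then Σ_{t=1}^n (F(β^{(t)}) − F(β⋆)) ≤ Σ_{t=1}^n (1/2)(1/γ_t − 1/γ_{t−1}) ‖β^{(t−1)} − β⋆‖_{D^{(t)}}² + (1/(2γ_0)) ‖β^{(0)} − β⋆‖_{D^{(1)}}²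 + Σ_{t=1}^{n−1} (1/(2γ_t)) (β^{(t)} − β⋆)ᵀ (D^{(t+1)} − D^{(t)}) (β^{(t)} − β⋆) − Σ_{t=1}^n ⟨τ_t − β⋆, η_t⟩_{D^{(t)}} + Σ_{t=1}^n γ_t ‖η_t‖_{D^{(t)}}². -/
/-!
Each step of the descent inequality (a), divided by `2γ_t`, bounds `F(β^{(t)}) − F(β⋆)` by
`(‖β^{(t−1)} − β⋆‖² − ‖β^{(t)} − β⋆‖²)/(2γ_t)` (both in the `D^{(t)}`-norm) plus the error term
`−⟨β^{(t)} − β⋆, η_t⟩`. Splitting `β^{(t)} − β⋆ = (τ_t − β⋆) + (β^{(t)} − τ_t)` and applying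
Cauchy–Schwarz together with (b) to the second part turns the error into
`−⟨τ_t − β⋆, η_t⟩ + γ_t ‖η_t‖²`. Summing over `t`, an Abel summation of the distance terms
produces the step-size differences `1/γ_t − 1/γ_{t−1}` and the metric differences
`D^{(t+1)} − D^{(t)}`; the last distance term is nonnegative and is dropped.
-/

open scoped BigOperators
open MeasureTheory Filter

open Finset

section WeightedInner

variable {p : ℕ} {d : Fin p → ℝ}

lemma dNorm_nonneg (d : Fin p → ℝ) (x : EuclideanSpace ℝ (Fin p)) : 0 ≤ dNorm d x :=
  Real.sqrt_nonneg _

lemma dInner_self_nonneg (hd : ∀ i, 0 ≤ d i) (x : EuclideanSpace ℝ (Fin p)) :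
    0 ≤ dInner d x x :=
  sum_nonneg fun i _ => by nlinarith [hd i, sq_nonneg (x i)]

lemma sq_dNorm (hd : ∀ i, 0 ≤ d i) (x : EuclideanSpace ℝ (Fin p)) :
    dNorm d x ^ 2 = dInner d x x :=
  Real.sq_sqrt (dInner_self_nonneg hd x)

lemma dInner_add_left (d : Fin p → ℝ) (x y z : EuclideanSpace ℝ (Fin p)) :
    dInner d (x + y) z = dInner d x z + dInner d y z := by
  simp only [dInner, ← sum_add_distrib, PiLp.add_apply]
  exact sum_congr rfl fun i _ => by ring

lemma dInner_sub_weight (d' d : Fin p → ℝ) (x y : EuclideanSpace ℝ (Fin p)) :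
    dInner (d' - d) x y = dInner d' x y - dInner d x y := by
  simp only [dInner, ← sum_sub_distrib, Pi.sub_apply]
  exact sum_congr rfl fun i _ => by ring

lemma abs_dInner_le (hd : ∀ i, 0 ≤ d i) (x y : EuclideanSpace ℝ (Fin p)) :
    |dInner d x y| ≤ dNorm d x * dNorm d y := by
  have hsq : dInner d x y ^ 2 ≤ dInner d x x * dInner d y y :=
    sum_sq_le_sum_mul_sum_of_sq_le_mul _
      (fun i _ => by nlinarith [hd i, sq_nonneg (x i)])
      (fun i _ => by nlinarith [hd i, sq_nonneg (y i)])
      (fun i _ => le_of_eq (by ring))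
  rw [dNorm, dNorm, ← Real.sqrt_mul (dInner_self_nonneg hd x)]
  exact Real.abs_le_sqrt hsq

end WeightedInner

lemma descent_step_le {p : ℕ} {d : Fin p → ℝ} (hd : ∀ i, 0 ≤ d i) {γ Δ : ℝ}
    {b₀ b s τ e : EuclideanSpace ℝ (Fin p)} (hγ : 0 < γ)
    (hdesc : dNorm d (b - s) ^ 2 ≤
      dNorm d (b₀ - s) ^ 2 - 2 * γ * Δ - 2 * γ * dInner d (b - s) e)
    (hprox : dNorm d (b - τ) ≤ γ * dNorm d e) :
    Δ ≤ 1 / (2 * γ) * (dNorm d (b₀ - s) ^ 2 - dNorm d (b - s) ^ 2) -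
      dInner d (τ - s) e + γ * dNorm d e ^ 2 := by
  have hsplit : dInner d (b - s) e = dInner d (τ - s) e + dInner d (b - τ) e := by
    rw [← dInner_add_left, sub_add_sub_cancel']
  have herr : |dInner d (b - τ) e| ≤ γ * dNorm d e ^ 2 :=
    calc |dInner d (b - τ) e|
        ≤ dNorm d (b - τ) * dNorm d e := abs_dInner_le hd _ _
      _ ≤ γ * dNorm d e * dNorm d e := mul_le_mul_of_nonneg_right hprox (dNorm_nonneg d e)
      _ = γ * dNorm d e ^ 2 := by ring
  have hscaled := mul_le_mul_of_nonneg_left (neg_le_of_abs_le herr) (by positivity : 0 ≤ 2 * γ)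
  refine le_of_mul_le_mul_left ?_ (by positivity : 0 < 2 * γ)
  have hexpand : 2 * γ * (1 / (2 * γ) * (dNorm d (b₀ - s) ^ 2 - dNorm d (b - s) ^ 2) -
      dInner d (τ - s) e + γ * dNorm d e ^ 2) = dNorm d (b₀ - s) ^ 2 - dNorm d (b - s) ^ 2 -
      2 * γ * dInner d (τ - s) e + 2 * γ * (γ * dNorm d e ^ 2) := by
    field_simp
  rw [hexpand]
  rw [hsplit] at hdesc
  linarith

section AbelSummation

variable (γ A B : ℕ → ℝ)

lemma sum_Icc_one_div_mul_sub_add_eq (m : ℕ) :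
    ∑ t ∈ Icc 1 (m + 1), 1 / (2 * γ t) * (A t - B t) + 1 / (2 * γ (m + 1)) * B (m + 1) =
      ∑ t ∈ Icc 1 (m + 1), 1 / 2 * (1 / γ t - 1 / γ (t - 1)) * A t +
        1 / (2 * γ 0) * A 1 + ∑ t ∈ Icc 1 m, 1 / (2 * γ t) * (A (t + 1) - B t) := by
  induction m with
  | zero =>
    simp only [zero_add, Icc_self, sum_singleton, Nat.sub_self, Icc_eq_empty_of_lt zero_lt_one,
      sum_empty, add_zero]
    ring
  | succ m ih =>
    simp only [sum_Icc_succ_top (Nat.le_add_left 1 _), Nat.add_sub_cancel] at ih ⊢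
    linear_combination ih

lemma sum_Icc_one_div_mul_sub_le (n : ℕ) (hγ : ∀ t ≤ n, 0 < γ t) (hA : 0 ≤ A 1)
    (hB : 0 ≤ B n) :
    ∑ t ∈ Icc 1 n, 1 / (2 * γ t) * (A t - B t) ≤
      ∑ t ∈ Icc 1 n, 1 / 2 * (1 / γ t - 1 / γ (t - 1)) * A t +
        1 / (2 * γ 0) * A 1 + ∑ t ∈ Icc 1 (n - 1), 1 / (2 * γ t) * (A (t + 1) - B t) := by
  cases n with
  | zero =>
    have := hγ 0 le_rfl
    simp only [Nat.zero_sub, Icc_eq_empty_of_lt zero_lt_one, sum_empty, zero_add, add_zero]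
    exact mul_nonneg (by positivity) hA
  | succ m =>
    have := hγ (m + 1) le_rfl
    have hlast : 0 ≤ 1 / (2 * γ (m + 1)) * B (m + 1) := by positivity
    rw [Nat.add_sub_cancel]
    linarith [sum_Icc_one_div_mul_sub_add_eq γ A B m]

end AbelSummation

theorem stmt_14_general {p : ℕ}
    (F : EuclideanSpace ℝ (Fin p) → ℝ)
    (n : ℕ)
    (β : ℕ → EuclideanSpace ℝ (Fin p)) (βstar : EuclideanSpace ℝ (Fin p))
    (τ η : ℕ → EuclideanSpace ℝ (Fin p))
    (γ : ℕ → ℝ) (hγ : ∀ t ≤ n, 0 < γ t)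
    (d : ℕ → Fin p → ℝ) (hd : ∀ t, 1 ≤ t → t ≤ n → ∀ i, 0 < d t i)
    (ha : ∀ t, 1 ≤ t → t ≤ n →
      (dNorm (d t) (β t - βstar)) ^ 2 ≤
        (dNorm (d t) (β (t - 1) - βstar)) ^ 2 -
          2 * γ t * (F (β t) - F βstar) -
          2 * γ t * dInner (d t) (β t - βstar) (η t))
    (hb : ∀ t, 1 ≤ t → t ≤ n →
      dNorm (d t) (β t - τ t) ≤ γ t * dNorm (d t) (η t)) :
    ∑ t ∈ Finset.Icc 1 n, (F (β t) - F βstar) ≤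
      (∑ t ∈ Finset.Icc 1 n,
          (1 / 2) * (1 / γ t - 1 / γ (t - 1)) * (dNorm (d t) (β (t - 1) - βstar)) ^ 2) +
        (1 / (2 * γ 0)) * (dNorm (d 1) (β 0 - βstar)) ^ 2 +
        (∑ t ∈ Finset.Icc 1 (n - 1),
          (1 / (2 * γ t)) *
            (∑ i, (d (t + 1) i - d t i) * (β t - βstar) i * (β t - βstar) i)) -
        (∑ t ∈ Finset.Icc 1 n, dInner (d t) (τ t - βstar) (η t)) +
        ∑ t ∈ Finset.Icc 1 n, γ t * (dNorm (d t) (η t)) ^ 2 := by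
  have hd₀ : ∀ t, 1 ≤ t → t ≤ n → ∀ i, 0 ≤ d t i := fun t h₁ h₂ i => (hd t h₁ h₂ i).le
  have hstep : ∀ t ∈ Icc 1 n, F (β t) - F βstar ≤
      1 / (2 * γ t) * (dNorm (d t) (β (t - 1) - βstar) ^ 2 - dNorm (d t) (β t - βstar) ^ 2) -
        dInner (d t) (τ t - βstar) (η t) + γ t * dNorm (d t) (η t) ^ 2 := fun t ht => by
    obtain ⟨h₁, h₂⟩ := mem_Icc.mp ht
    exact descent_step_le (hd₀ t h₁ h₂) (hγ t h₂) (ha t h₁ h₂) (hb t h₁ h₂)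
  have hmetric : ∀ t ∈ Icc 1 (n - 1),
      1 / (2 * γ t) * (dNorm (d (t + 1)) (β (t + 1 - 1) - βstar) ^ 2 -
        dNorm (d t) (β t - βstar) ^ 2) =
      1 / (2 * γ t) * ∑ i, (d (t + 1) i - d t i) * (β t - βstar) i * (β t - βstar) i := by
    intro t ht
    obtain ⟨h₁, h₂⟩ := mem_Icc.mp ht
    rw [Nat.add_sub_cancel, sq_dNorm (hd₀ (t + 1) (by omega) (by omega)),
      sq_dNorm (hd₀ t h₁ (by omega)), ← dInner_sub_weight]
    rfl
  have habel := sum_Icc_one_div_mul_sub_le γ (fun t => dNorm (d t) (β (t - 1) - βstar) ^ 2)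
    (fun t => dNorm (d t) (β t - βstar) ^ 2) n hγ (by positivity) (by positivity)
  rw [sum_congr rfl hmetric, Nat.sub_self] at habel
  have hsum := sum_le_sum hstep
  simp only [sum_add_distrib, sum_sub_distrib] at hsum ⊢
  linarith

/-- Summing the one-step descent inequality (a) together with the
nonexpansiveness bound (b) over `t = 1, …, n` yields the key bound on
`Σ_{t=1}^n (F(β^{(t)}) − F(β⋆))`. -/
theorem stmt_14 {p : ℕ} (hp : 1 ≤ p)
    (F : EuclideanSpace ℝ (Fin p) → ℝ)
    (n : ℕ) (hn : 1 ≤ n)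
    (β : ℕ → EuclideanSpace ℝ (Fin p)) (βstar : EuclideanSpace ℝ (Fin p))
    (τ η : ℕ → EuclideanSpace ℝ (Fin p))
    (γ : ℕ → ℝ) (hγ : ∀ t ≤ n, 0 < γ t)
    (d : ℕ → Fin p → ℝ) (hd : ∀ t, 1 ≤ t → t ≤ n → ∀ i, 0 < d t i)
    (ha : ∀ t, 1 ≤ t → t ≤ n →
      (dNorm (d t) (β t - βstar)) ^ 2 ≤
        (dNorm (d t) (β (t - 1) - βstar)) ^ 2 -
          2 * γ t * (F (β t) - F βstar) -
          2 * γ t * dInner (d t) (β t - βstar) (η t))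
    (hb : ∀ t, 1 ≤ t → t ≤ n →
      dNorm (d t) (β t - τ t) ≤ γ t * dNorm (d t) (η t)) :
    ∑ t ∈ Finset.Icc 1 n, (F (β t) - F βstar) ≤
      (∑ t ∈ Finset.Icc 1 n,
          (1 / 2) * (1 / γ t - 1 / γ (t - 1)) * (dNorm (d t) (β (t - 1) - βstar)) ^ 2) +
        (1 / (2 * γ 0)) * (dNorm (d 1) (β 0 - βstar)) ^ 2 +
        (∑ t ∈ Finset.Icc 1 (n - 1),
          (1 / (2 * γ t)) *
            (∑ i, (d (t + 1) i - d t i) * (β t - βstar) i * (β t - βstar) i)) -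
        (∑ t ∈ Finset.Icc 1 n, dInner (d t) (τ t - βstar) (η t)) +
        ∑ t ∈ Finset.Icc 1 n, γ t * (dNorm (d t) (η t)) ^ 2 :=
  stmt_14_general F n β βstar τ η γ hγ d hd ha hb
end
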